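/- Let m ≥ 1, n ≥ 3 and let I(α) = α·{0, 1, mn², mn(n+1), m(n+1)²} ⊂ ℕ be the α-fold sumset of the set {0, 1, mn², mn(n+1), m(n+1)²} (equivalently, the set of exponents of y occurring in the minimal monomial generators of (x^{m(n+1)²}, x^{m(n+1)²−1}y, x^{m(2n+1)}y^{mn²}, x^{m(n+1)}y^{mn(n+1)}, y^{m(n+1)²})^α). Then for α ≥ mn + m + 2n and α ≥ mn² − 1, |I(α)| = m(n+1)²α − [C(m,2)(n+1)² + m(n²−1)], where C(m,2) = m(m−1)/2. -/
import Mathlib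

/- STATEMENT 19: For m ≥ 1, n ≥ 3, let E = {0, 1, mn², mn(n+1), m(n+1)²} ⊂ ℕ and let
I(α) = α·E be the α-fold sumset E + ⋯ + E (which records the exponents of y occurring
in degree α of the monomial ideal of the appendix).  Then for
α ≥ mn + m + 2n and α ≥ mn² − 1,
  |I(α)| = m(n+1)²α − [ C(m,2)(n+1)² + m(n²−1) ],  where C(m,2) = m(m−1)/2. -/

open Pointwise

/-- The `α`-fold (pointwise) sumset `E + E + ⋯ + E` (`α` times) of a finite set of
natural numbers; for `α = 0` it is `{0}`. -/
def foldSumset (E : Finset ℕ) : ℕ → Finset ℕ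
  | 0 => {0}
  | a + 1 => foldSumset E a + E

lemma mem_fold {a b c : ℕ} {α x₁ i j k : ℕ} (h : x₁ + i + j + k ≤ α) :
    x₁ + i * a + j * b + k * c ∈ foldSumset ({0, 1, a, b, c} : Finset ℕ) α := by
  induction α generalizing x₁ i j k with
  | zero =>
      obtain ⟨rfl, rfl, rfl, rfl⟩ : x₁ = 0 ∧ i = 0 ∧ j = 0 ∧ k = 0 := by omega
      simp [foldSumset]
  | succ α ih =>
      rw [foldSumset, Finset.mem_add]
      by_cases hle : x₁ + i + j + k ≤ α
      · exact ⟨_, ih hle, 0, by simp, by ring⟩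
      · rcases x₁ with _ | x₁
        · rcases i with _ | i
          · rcases j with _ | j
            · rcases k with _ | k
              · omega
              · exact ⟨0 + 0*a + 0*b + k*c, ih (by omega), c, by simp, by ring⟩
            · exact ⟨0 + 0*a + j*b + k*c, ih (by omega), b, by simp, by ring⟩
          · exact ⟨0 + i*a + j*b + k*c, ih (by omega), a, by simp, by ring⟩
        · exact ⟨x₁ + i*a + j*b + k*c, ih (by omega), 1, by simp, by ring⟩

lemma rep_of_mem {a b c : ℕ} {α x : ℕ} (h : x ∈ foldSumset ({0, 1, a, b, c} : Finset ℕ) α) :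
    ∃ x₁ i j k, x₁ + i + j + k ≤ α ∧ x = x₁ + i * a + j * b + k * c := by
  induction α generalizing x with
  | zero =>
      simp [foldSumset] at h
      exact ⟨0, 0, 0, 0, by omega, by simp [h]⟩
  | succ α ih =>
      rw [foldSumset, Finset.mem_add] at h
      obtain ⟨y, hy, z, hz, rfl⟩ := h
      obtain ⟨x₁, i, j, k, hs, rfl⟩ := ih hy
      simp only [Finset.mem_insert, Finset.mem_singleton] at hz
      rcases hz with rfl | rfl | rfl | rfl | rfl
      · exact ⟨x₁, i, j, k, by omega, by ring⟩
      · exact ⟨x₁+1, i, j, k, by omega, by ring⟩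
      · exact ⟨x₁, i+1, j, k, by omega, by ring⟩
      · exact ⟨x₁, i, j+1, k, by omega, by ring⟩
      · exact ⟨x₁, i, j, k+1, by omega, by ring⟩

lemma digit_unique {M a b u v : ℕ} (ha : a < M) (hb : b < M) (h : a + M*u = b + M*v) :
    a = b ∧ u = v := by
  have h1 : (a + M*u) % M = a := by rw [Nat.add_mul_mod_self_left, Nat.mod_eq_of_lt ha]
  have h2 : (b + M*v) % M = b := by rw [Nat.add_mul_mod_self_left, Nat.mod_eq_of_lt hb]
  have hab : a = b := by rw [← h1, h, h2]
  subst hab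
  have h3 : M*u = M*v := by omega
  exact ⟨rfl, Nat.eq_of_mul_eq_mul_left (by omega) h3⟩


lemma lemC1 {n w q : ℕ} (hn : 3 ≤ n) (hq : q ≤ n) (hmod : w % (n+1) = q)
    (hlt : w < q * n^2) : w / n^2 + w % n^2 + 1 ≤ n^2 := by
  obtain ⟨d, rfl⟩ : ∃ d, n = d + 3 := ⟨n - 3, by omega⟩
  set i := w / (d+3)^2 with hi
  set ρ := w % (d+3)^2 with hρdef
  have hw : (d+3)^2 * i + ρ = w := Nat.div_add_mod w ((d+3)^2)
  have hρ : ρ < (d+3)^2 := Nat.mod_lt _ (by positivity)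
  by_contra hcon
  push_neg at hcon
  have hiq : i < q := by nlinarith
  set dd := (d+3)^2 - ρ with hdd
  have hdd1 : dd + ρ = (d+3)^2 := by omega
  have hd1 : 1 ≤ dd := by omega
  have hd2 : dd ≤ i := by omega
  set e := i + 1 - dd with he
  have he1 : e + dd = i + 1 := by omega
  have he2 : e ≤ i := by omega
  have key : w = (d+4)*((d+2)*(i+1)) + e := by nlinarith [hw, hdd1, he1]
  have hmod2 : w % (d+4) = e := by
    rw [key, add_comm, Nat.add_mul_mod_self_left]
    exact Nat.mod_eq_of_lt (by omega)
  have hmod' : w % (d + 4) = q := by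
    have : d + 3 + 1 = d + 4 := rfl
    rw [this] at hmod; exact hmod
  have hqe : q = e := by omega
  nlinarith [hw]

lemma sumq (n X : ℕ) (hX : 2*n ≤ X) :
    ∑ q ∈ Finset.range (n+1), (X - 2*q + 1) = (n+1)*(X - 2*n) + (n*(n+1) + (n+1)) := by
  have h1 : ∀ q ∈ Finset.range (n+1), X - 2*q + 1 = (X - 2*n) + (2*(n-q) + 1) := by
    intro q hq; simp only [Finset.mem_range] at hq; omega
  rw [Finset.sum_congr rfl h1, Finset.sum_add_distrib, Finset.sum_add_distrib,
    Finset.sum_const, Finset.sum_const, Finset.card_range, smul_eq_mul, smul_eq_mul, mul_one,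
    ← Finset.mul_sum]
  have h3 : ∑ q ∈ Finset.range (n+1), (n-q) = ∑ q ∈ Finset.range (n+1), q := by
    have := Finset.sum_range_reflect (fun i => i) (n+1); simpa using this
  have h4 : (∑ q ∈ Finset.range (n+1), q) * 2 = (n+1)*n := Finset.sum_range_id_mul_two (n+1)
  rw [h3]
  linarith [h4]

lemma forward (m n α x : ℕ) (hm : 1 ≤ m) (hn : 3 ≤ n)
    (hx : x ∈ foldSumset ({0, 1, m*n^2, m*n*(n+1), m*(n+1)^2} : Finset ℕ) α) :
    ∃ r q K, r < m ∧ q < n+1 ∧ K < (n+1)*(α - r) - 2*q + 1 ∧ r + m*q + m*(n+1)*K = x := by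
  obtain ⟨x₁, i, j, k, hsum, rfl⟩ := rep_of_mem hx
  obtain ⟨s₁, r, hx₁, hr⟩ : ∃ s₁ r, m*s₁ + r = x₁ ∧ r < m :=
    ⟨x₁/m, x₁%m, Nat.div_add_mod x₁ m, Nat.mod_lt _ (by omega)⟩
  obtain ⟨w, hwdef⟩ : ∃ w, w = i*n^2 + j*(n*(n+1)) + k*(n+1)^2 + s₁ := ⟨_, rfl⟩
  obtain ⟨K, q, hKq, hq⟩ : ∃ K q, (n+1)*K + q = w ∧ q < n+1 :=
    ⟨w/(n+1), w%(n+1), Nat.div_add_mod w (n+1), Nat.mod_lt _ (by omega)⟩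
  -- decomposition showing w ≡ i + s₁ mod (n+1)
  have hiden : (n+1)*(n-1) + 1 = n^2 := by
    obtain ⟨d, rfl⟩ : ∃ d, n = d + 3 := ⟨n - 3, by omega⟩
    have : d + 3 - 1 = d + 2 := by omega
    rw [this]; ring
  obtain ⟨B, hB⟩ : ∃ B, w = (i + s₁) + (n+1)*B := by
    refine ⟨i*(n-1) + j*n + k*(n+1), ?_⟩
    have e1 : (n+1)*(i*(n-1) + j*n + k*(n+1))
        = i*((n+1)*(n-1)) + j*(n*(n+1)) + k*(n+1)^2 := by ring
    have e2 : i*((n+1)*(n-1)) + i = i*n^2 := by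
      calc i*((n+1)*(n-1)) + i = i*((n+1)*(n-1) + 1) := by ring
      _ = i*n^2 := by rw [hiden]
    omega
  have hqle : q ≤ i + s₁ := by
    by_contra hcon
    push_neg at hcon
    rcases le_or_gt B K with hbk | hbk
    · have h1 : (n+1)*B ≤ (n+1)*K := Nat.mul_le_mul_left _ hbk
      omega
    · have h1 : (n+1)*(K+1) ≤ (n+1)*B := Nat.mul_le_mul_left _ hbk
      have e : (n+1)*(K+1) = (n+1)*K + (n+1) := by ring
      omega
  -- the key bound
  have hkey : K + 2*q ≤ (n+1)*(α - r) := by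
    have hA'eq : m*s₁ + (i+j+k) + r ≤ α := by omega
    have hA'le : m*s₁ + (i+j+k) ≤ α - r := by omega
    have m1 : q*(2*n+1) ≤ (i+s₁)*(2*n+1) := Nat.mul_le_mul_right _ hqle
    have m2 : (n+1)^2*(m*s₁ + (i+j+k)) ≤ (n+1)^2*(α - r) := Nat.mul_le_mul_left _ hA'le
    have hTid : i*n^2 + j*(n*(n+1)) + k*(n+1)^2 + (i*(2*n+1) + j*(n+1)) = (n+1)^2*(i+j+k) := by
      ring
    have m2' : (n+1)^2*(m*s₁ + (i+j+k)) = (n+1)^2*m*s₁ + (n+1)^2*(i+j+k) := by ring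
    have m1' : (i+s₁)*(2*n+1) = i*(2*n+1) + s₁*(2*n+1) := by ring
    have m3 : s₁*(2*n+1) + s₁ ≤ (n+1)^2*m*s₁ := by
      have h0 : 2*n+2 ≤ (n+1)^2*m := by nlinarith
      calc s₁*(2*n+1) + s₁ = (2*n+2)*s₁ := by ring
      _ ≤ ((n+1)^2*m)*s₁ := Nat.mul_le_mul_right _ h0
      _ = (n+1)^2*m*s₁ := by ring
    have hwq : w + q*(2*n+1) ≤ (n+1)^2*(α - r) := by linarith [Nat.zero_le (j*(n+1)), Nat.zero_le (i*(2*n+1)), Nat.zero_le s₁]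
    have e7 : (n+1)*(K + 2*q) = (n+1)*K + q*(2*n+1) + q := by ring
    have e8 : (n+1)*((n+1)*(α-r)) = (n+1)^2*(α-r) := by ring
    have : (n+1)*(K + 2*q) ≤ (n+1)*((n+1)*(α-r)) := by linarith
    exact Nat.le_of_mul_le_mul_left this (by omega)
  refine ⟨r, q, K, hr, hq, by omega, ?_⟩
  zify at hKq hx₁ hwdef ⊢
  linear_combination (m:ℤ)*hKq + hx₁ + (m:ℤ)*hwdef

lemma backward (m n α r q K : ℕ) (hm : 1 ≤ m) (hn : 3 ≤ n)
    (hα1 : m*n + m + 2*n ≤ α) (hα2 : m*n^2 - 1 ≤ α)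
    (hr : r < m) (hq : q < n+1) (hK : K < (n+1)*(α - r) - 2*q + 1) :
    r + m*q + m*(n+1)*K ∈ foldSumset ({0, 1, m*n^2, m*n*(n+1), m*(n+1)^2} : Finset ℕ) α := by
  have hq' : q ≤ n := by omega
  have hrα : r + (m*n + 2*n + 1) ≤ α := by linarith
  set A' := α - r with hA'
  have hA'eq : A' + r = α := by omega
  have hA'low : m*n + 2*n + 1 ≤ A' := by linarith
  have hA'low2 : 2*n + 3 ≤ A' := by
    have : n ≤ m*n := Nat.le_mul_of_pos_left n hm
    linarith
  have h2q : 2*q ≤ (n+1)*A' := by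
    have : A' ≤ (n+1)*A' := Nat.le_mul_of_pos_left _ (by omega)
    linarith
  have hKq : K + 2*q ≤ (n+1)*A' := by omega
  have hα2' : m*n^2 ≤ α + 1 := by omega
  by_cases hcA : n*A' ≤ K + q
  · -- Case A : top region, exact representation with α coins
    obtain ⟨jb, hjbeq⟩ : ∃ jb, jb + (2*q + K) = (n+1)*A' := ⟨(n+1)*A' - (2*q + K), by omega⟩
    obtain ⟨kk, hkkeq⟩ : ∃ kk, kk + n*A' = K + q := ⟨(K + q) - n*A', by omega⟩
    have hbridge : (n+1)*A' = n*A' + A' := by ring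
    have hsum : r + q + jb + kk = α := by linarith
    have hval : r + m*q + m*(n+1)*K
        = r + q*(m*n^2) + jb*(m*n*(n+1)) + kk*(m*(n+1)^2) := by
      zify at hjbeq hkkeq ⊢
      linear_combination (-(m:ℤ)*n*(n+1)) * hjbeq + (-(m:ℤ)*(n+1)^2) * hkkeq
    rw [hval]
    exact mem_fold (by omega)
  · push_neg at hcA
    by_cases hcC1 : K + q < q*n
    · -- Case C1 : very small w, use only n² coins plus units
      set w := (n+1)*K + q with hw
      have hwmod : w % (n+1) = q := by
        rw [hw, Nat.mul_add_mod]
        exact Nat.mod_eq_of_lt hq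
      have hwlt : w < q*n^2 := by
        have h1 : K + q + 1 ≤ q*n := by omega
        have hh := Nat.mul_le_mul_left (n+1) h1
        have h5 : (n+1)*K + (q*n + q + n + 1) ≤ q*n^2 + q*n := by
          calc (n+1)*K + (q*n + q + n + 1) = (n+1)*(K+q+1) := by ring
          _ ≤ (n+1)*(q*n) := hh
          _ = q*n^2 + q*n := by ring
        omega
      have hkey0 := lemC1 hn hq' hwmod hwlt
      obtain ⟨i, L, hiL2, hkey⟩ : ∃ i L, n^2 * i + L = (n+1)*K + q ∧ L + i + 1 ≤ n^2 := by
        refine ⟨w / n^2, w % n^2, ?_, ?_⟩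
        · have hiL : n^2 * (w / n^2) + w % n^2 = w := Nat.div_add_mod w (n^2)
          omega
        · omega
      have hval : r + m*q + m*(n+1)*K
          = (r + m*L) + i*(m*n^2) + 0*(m*n*(n+1)) + 0*(m*(n+1)^2) := by
        zify at hiL2 ⊢
        linear_combination (-(m:ℤ)) * hiL2
      rw [hval]
      apply mem_fold
      have hb1 : m*(L + i + 1) ≤ m*n^2 := Nat.mul_le_mul_left m hkey
      have hb2 : i ≤ m*i := Nat.le_mul_of_pos_left i (by omega)
      have e1 : m*(L + i + 1) = m*L + m*i + m := by ring
      linarith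
    · -- Case C2
      push_neg at hcC1
      obtain ⟨G, hGeq⟩ : ∃ G, G + q*n = K + q := ⟨(K + q) - q*n, by omega⟩
      obtain ⟨s, e, hse, hen⟩ : ∃ s e, n * s + e = G ∧ e < n :=
        ⟨G / n, G % n, Nat.div_add_mod G n, Nat.mod_lt _ (by omega)⟩
      by_cases hcC2a : e ≤ s
      · -- Case C2a: exact representation, few coins
        obtain ⟨jb, hjbeq⟩ : ∃ jb, jb + e = s := ⟨s - e, by omega⟩
        have hmul : n*s = n*jb + n*e := by rw [← hjbeq]; ring
        have hKval : K + q = n*jb + (n+1)*e + q*n := by linarith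
        have hns : n*(q + s) < n*A' := by
          have e0 : n*(q+s) = n*q + n*s := by ring
          have e1 : n*q = q*n := by ring
          linarith
        have hqs : q + s < A' := lt_of_mul_lt_mul_left hns (Nat.zero_le n)
        have hval : r + m*q + m*(n+1)*K
            = r + q*(m*n^2) + jb*(m*n*(n+1)) + e*(m*(n+1)^2) := by
          zify at hKval ⊢
          linear_combination ((m:ℤ)*(n+1)) * hKval
        rw [hval]
        exact mem_fold (by omega)
      · push_neg at hcC2a
        by_cases hs1 : 1 ≤ s
        · -- C2b-i
          obtain ⟨t, hte⟩ : ∃ t, t + s = e := ⟨e - s, by omega⟩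
          have hKval : K + q = n*s + (t + s) + q*n := by linarith
          have hval : r + m*q + m*(n+1)*K
              = (r + m*((n+1)*t)) + q*(m*n^2) + 0*(m*n*(n+1)) + s*(m*(n+1)^2) := by
            zify at hKval ⊢
            linear_combination ((m:ℤ)*(n+1)) * hKval
          rw [hval]
          apply mem_fold
          have hbound : (n+1)*t + q + s + 1 ≤ n^2 := by
            have ht1 : t + 1 + s ≤ n := by omega
            have e1 := Nat.mul_le_mul_left (n+1) ht1
            have e2 : (n+1)*(t+1+s) = (n+1)*t + (n+1) + (n+1)*s := by ring
            have e3 : (n+1)*n = n^2 + n := by ring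
            have e4 : n ≤ n*s := Nat.le_mul_of_pos_right n hs1
            have e5 : (n+1)*s = n*s + s := by ring
            linarith
          have hb1 : m*((n+1)*t + q + s + 1) ≤ m*n^2 := Nat.mul_le_mul_left m hbound
          have hb2 : q + s ≤ m*(q + s) := Nat.le_mul_of_pos_left _ (by omega)
          have e6 : m*((n+1)*t + q + s + 1) = m*((n+1)*t) + m*(q+s) + m := by ring
          linarith
        · -- s = 0
          have hs0 : s = 0 := by omega
          have hns0 : n*s = 0 := by rw [hs0]; ring
          have heG : e = G := by omega
          by_cases hq1 : 1 ≤ q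
          · -- C2b-ii
            have he1 : 1 ≤ e := by omega
            obtain ⟨u, hueq⟩ : ∃ u, u + n = (n+1)*e := by
              have : n + 1 ≤ (n+1)*e := Nat.le_mul_of_pos_right _ (by omega)
              exact ⟨(n+1)*e - n, by omega⟩
            obtain ⟨q1, hq1eq⟩ : ∃ q1, q1 + 1 = q := ⟨q - 1, by omega⟩
            have hKval : K + q = e + q*n := by omega
            have hval : r + m*q + m*(n+1)*K
                = (r + m*u) + q1*(m*n^2) + 1*(m*n*(n+1)) + 0*(m*(n+1)^2) := by
              zify at hueq hq1eq hKval ⊢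
              linear_combination ((m:ℤ)*(n+1)) * hKval + (-(m:ℤ)) * hueq + (-(m:ℤ)*n^2) * hq1eq
            rw [hval]
            apply mem_fold
            have hbound : u + q + 1 ≤ n^2 := by
              have he3 : e + 1 ≤ n := hen
              have e1 := Nat.mul_le_mul_left (n+1) he3
              have e2 : (n+1)*(e+1) = (n+1)*e + n + 1 := by ring
              have e3 : (n+1)*n = n^2 + n := by ring
              linarith
            have hb1 : m*(u + q + 1) ≤ m*n^2 := Nat.mul_le_mul_left m hbound
            have hb2 : q ≤ m*q := Nat.le_mul_of_pos_left _ (by omega)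
            have e6 : m*(u + q + 1) = m*u + m*q + m := by ring
            linarith
          · -- C2b-iii : q = 0, s = 0
            have hq0 : q = 0 := by omega
            have hqn0 : q*n = 0 := by rw [hq0]; ring
            have hKe : K = e := by omega
            have hval : r + m*q + m*(n+1)*K
                = (r + m*((n+1)*e)) + 0*(m*n^2) + 0*(m*n*(n+1)) + 0*(m*(n+1)^2) := by
              rw [hq0, hKe]; ring
            rw [hval]
            apply mem_fold
            have hbound : (n+1)*e + 1 ≤ n^2 := by
              have he3 : e + 1 ≤ n := hen
              have e1 := Nat.mul_le_mul_left (n+1) he3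
              have e2 : (n+1)*(e+1) = (n+1)*e + n + 1 := by ring
              have e3 : (n+1)*n = n^2 + n := by ring
              linarith
            have hb1 : m*((n+1)*e + 1) ≤ m*n^2 := Nat.mul_le_mul_left m hbound
            have e6 : m*((n+1)*e + 1) = m*((n+1)*e) + m := by ring
            linarith

set_option maxHeartbeats 1000000 in
theorem card_sumset_monomial_curve (m n : ℕ) (hm : 1 ≤ m) (hn : 3 ≤ n) :
    ∀ α : ℕ, m * n + m + 2 * n ≤ α → m * n ^ 2 - 1 ≤ α →
      (foldSumset ({0, 1, m * n ^ 2, m * n * (n + 1), m * (n + 1) ^ 2} : Finset ℕ) α).card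
        = m * (n + 1) ^ 2 * α - (m * (m - 1) / 2 * (n + 1) ^ 2 + m * (n ^ 2 - 1)) := by
  intro α hα1 hα2
  classical
  set D : Finset (Σ _ : ℕ, Σ _ : ℕ, ℕ) :=
    (Finset.range m).sigma (fun r => (Finset.range (n+1)).sigma
      (fun q => Finset.range ((n+1)*(α - r) - 2*q + 1))) with hD
  have himg : D.image (fun p : (Σ _ : ℕ, Σ _ : ℕ, ℕ) => p.1 + m * p.2.1 + m * (n+1) * p.2.2)
      = foldSumset ({0, 1, m * n ^ 2, m * n * (n + 1), m * (n + 1) ^ 2} : Finset ℕ) α := by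
    apply Finset.ext
    intro x
    simp only [Finset.mem_image]
    constructor
    · rintro ⟨⟨r, q, K⟩, hp, rfl⟩
      rw [hD] at hp
      simp only [Finset.mem_sigma, Finset.mem_range] at hp
      obtain ⟨hr, hq, hK⟩ := hp
      exact backward m n α r q K hm hn hα1 hα2 hr hq hK
    · intro hx
      obtain ⟨r, q, K, hr, hq, hK, hval⟩ := forward m n α x hm hn hx
      refine ⟨⟨r, q, K⟩, ?_, hval⟩
      rw [hD]
      simp only [Finset.mem_sigma, Finset.mem_range]
      exact ⟨hr, hq, hK⟩
  have hinj : Set.InjOn (fun p : (Σ _ : ℕ, Σ _ : ℕ, ℕ) => p.1 + m * p.2.1 + m * (n+1) * p.2.2) ↑D := by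
    rintro ⟨r, q, K⟩ hp ⟨r', q', K'⟩ hp' hfeq
    simp only [hD, Finset.coe_sigma, Set.mem_sigma_iff, Finset.mem_coe, Finset.mem_range] at hp hp'
    simp only at hfeq
    have e1 : r + m * (q + (n+1) * K) = r' + m * (q' + (n+1) * K') := by
      ring_nf; ring_nf at hfeq; omega
    have hr : r < m := hp.1
    have hr' : r' < m := hp'.1
    obtain ⟨rfl, e2⟩ := digit_unique hr hr' e1
    have hq : q < n + 1 := hp.2.1
    have hq' : q' < n + 1 := hp'.2.1
    obtain ⟨rfl, e3⟩ := digit_unique hq hq' e2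
    have : K = K' := by omega
    subst this
    rfl
  have hcard : D.card = ∑ r ∈ Finset.range m, ∑ q ∈ Finset.range (n+1), ((n+1)*(α - r) - 2*q + 1) := by
    rw [hD, Finset.card_sigma]
    refine Finset.sum_congr rfl fun r _ => ?_
    rw [Finset.card_sigma]
    refine Finset.sum_congr rfl fun q _ => ?_
    rw [Finset.card_range]
  rw [← himg, Finset.card_image_of_injOn hinj, hcard]
  clear himg hinj hcard
  clear_value D
  clear hD D
  have hmα : m + 6 ≤ α := by nlinarith
  obtain ⟨β, hβ⟩ : ∃ β, α = β + m := ⟨α - m, by omega⟩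
  have hβlow : 2*n ≤ β := by nlinarith
  have step1 : ∀ r ∈ Finset.range m,
      ∑ q ∈ Finset.range (n+1), ((n+1)*(α - r) - 2*q + 1)
        = (n+1)*((n+1)*(α - r) - 2*n) + (n*(n+1) + (n+1)) := by
    intro r hr
    simp only [Finset.mem_range] at hr
    apply sumq
    calc 2*n ≤ β := hβlow
    _ ≤ (α - r) := by omega
    _ ≤ (n+1)*(α-r) := Nat.le_mul_of_pos_left _ (by omega)
  rw [Finset.sum_congr rfl step1]
  have step2 : ∑ r ∈ Finset.range m, ((n+1)*((n+1)*(α - r) - 2*n) + (n*(n+1) + (n+1)))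
      = ∑ r ∈ Finset.range m, ((n+1)*((n+1)*(β + 1 + r) - 2*n) + (n*(n+1) + (n+1))) := by
    rw [← Finset.sum_range_reflect (fun r => ((n+1)*((n+1)*(β + 1 + r) - 2*n) + (n*(n+1) + (n+1)))) m]
    refine Finset.sum_congr rfl fun r hr => ?_
    simp only [Finset.mem_range] at hr
    have : β + 1 + (m - 1 - r) = α - r := by omega
    rw [this]
  rw [step2]
  have hP : 2*n ≤ (n+1)*β :=
    le_trans hβlow (Nat.le_mul_of_pos_left _ (by omega))
  have step3 : ∀ r ∈ Finset.range m,
      ((n+1)*((n+1)*(β + 1 + r) - 2*n) + (n*(n+1) + (n+1)))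
        = (n+1)*((n+1)*β - 2*n) + (n+1)^2*(r+1) + (n*(n+1) + (n+1)) := by
    intro r hr
    have e1 : (n+1)*(β+1+r) = (n+1)*β + (n+1)*(r+1) := by ring
    rw [e1, Nat.sub_add_comm hP, Nat.mul_add]
    ring
  rw [Finset.sum_congr rfl step3]
  rw [Finset.sum_add_distrib, Finset.sum_add_distrib, Finset.sum_const, Finset.sum_const,
    Finset.card_range, smul_eq_mul, smul_eq_mul, ← Finset.mul_sum]
  have hsr : ∑ r ∈ Finset.range m, (r+1) = (∑ r ∈ Finset.range m, r) + m := by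
    rw [Finset.sum_add_distrib, Finset.sum_const, Finset.card_range, smul_eq_mul, mul_one]
  rw [hsr]
  set G := ∑ r ∈ Finset.range m, r with hG
  have hG2 : G * 2 = m * (m-1) := Finset.sum_range_id_mul_two m
  rw [← hG2]
  have hdiv : G * 2 / 2 = G := by omega
  rw [hdiv]
  set Z := (n+1)*β - 2*n with hZ
  have hZ2 : Z + 2*n = (n+1)*β := by omega
  have hn2 : 1 ≤ n^2 := by nlinarith
  -- provable bound for the subtraction on the RHS
  have e1 : m*(m-1)*(n+1)^2 ≤ m*(n+1)^2*α := by
    calc m*(m-1)*(n+1)^2 = m*(n+1)^2*(m-1) := by ring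
    _ ≤ m*(n+1)^2*α := Nat.mul_le_mul_left _ (by omega)
  have e2 : 2*(m*(n^2-1)) ≤ m*(n+1)^2*α := by
    have h2a : 2*(n^2-1) ≤ 2*n^2 := by omega
    have h2b : m*(2*n^2) ≤ m*((n+1)^2*α) := Nat.mul_le_mul_left _ (by nlinarith)
    calc 2*(m*(n^2-1)) = m*(2*(n^2-1)) := by ring
    _ ≤ m*(2*n^2) := Nat.mul_le_mul_left _ h2a
    _ ≤ m*((n+1)^2*α) := h2b
    _ = m*(n+1)^2*α := by ring
  have e3 : 2*(G*(n+1)^2) = m*(m-1)*(n+1)^2 := by rw [← hG2]; ring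
  have hle : G*(n+1)^2 + m*(n^2-1) ≤ m*(n+1)^2*α := by
    have h4 : 2*(G*(n+1)^2 + m*(n^2-1)) ≤ 2*(m*(n+1)^2*α) := by linarith
    exact Nat.le_of_mul_le_mul_left h4 (by norm_num)
  clear_value G Z
  clear step1 step2 step3 hsr hG hZ hdiv e1 e2 e3
  zify [hn2, hm, hle] at hG2 hZ2 hβ ⊢
  linear_combination ((m : ℤ) * (n+1)) * hZ2 - ((m:ℤ) * (n+1)^2) * hβ + ((n:ℤ)+1)^2 * hG2
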